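/- Define on the algebra of differential polynomials ℂ[[u_0]][u_1,u_2,…] the bracket [f,g] = ∑_{s≥0} ( (∂_x^s f)·∂g/∂u_s − (∂_x^s g)·∂f/∂u_s ). Then for P of lexicographically leading monomial f(u_0) u_1^{α_1}⋯u_m^{α_m} x^{-n} (with m ≥ 1, ordering 1/x < u_0 < u_1 < ⋯), the bracket [u_0 u_1, P] has leading monomial (∑_{k=1}^m (k+1)α_k − α_1 − 1)·f(u_0) u_1^{α_1+1} u_2^{α_2}⋯u_m^{α_m} x^{-n} plus monomials of lower lexicographic order. -/
import Mathlib


open MvPolynomial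

noncomputable def sDx (f : MvPolynomial (Option ℕ) ℂ) : MvPolynomial (Option ℕ) ℂ :=
  ∑ v ∈ f.vars,
    (match v with
      | none => -(MvPolynomial.X (none : Option ℕ)) ^ 2
      | some k => MvPolynomial.X (some (k + 1))) * MvPolynomial.pderiv v f

def varRank : Option ℕ → ℕ := fun v => match v with
  | none => 0
  | some k => k + 1

def lexLt (d e : Option ℕ →₀ ℕ) : Prop :=
  ∃ v : Option ℕ, d v < e v ∧ ∀ w : Option ℕ, varRank v < varRank w → d w = e w

noncomputable def uBound (f : MvPolynomial (Option ℕ) ℂ) : ℕ := f.vars.sup varRank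

noncomputable def dpBracket (f g : MvPolynomial (Option ℕ) ℂ) : MvPolynomial (Option ℕ) ℂ :=
  ∑ s ∈ Finset.range (max (uBound f) (uBound g)),
    (sDx^[s] f * MvPolynomial.pderiv (some s) g - sDx^[s] g * MvPolynomial.pderiv (some s) f)

-- ## auxiliary
abbrev MP := MvPolynomial (Option ℕ) ℂ

noncomputable def cvar : Option ℕ → MP := fun v => match v with
  | none => -(MvPolynomial.X (none : Option ℕ)) ^ 2
  | some k => MvPolynomial.X (some (k + 1))

lemma sDx_def' (f : MP) : sDx f = ∑ v ∈ f.vars, cvar v * MvPolynomial.pderiv v f := rfl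

lemma varRank_inj : Function.Injective varRank := by
  intro a b h
  cases a <;> cases b <;> simp [varRank] at h ⊢ <;> omega

lemma lexLt_trans {a b c : Option ℕ →₀ ℕ} (h1 : lexLt a b) (h2 : lexLt b c) : lexLt a c := by
  obtain ⟨v, hv, hva⟩ := h1
  obtain ⟨v', hv', hva'⟩ := h2
  rcases lt_trichotomy (varRank v) (varRank v') with h | h | h
  · exact ⟨v', by rw [hva v' h]; exact hv', fun w hw => (hva w (h.trans hw)).trans (hva' w hw)⟩
  · rcases varRank_inj h with rfl
    exact ⟨v, hv.trans hv', fun w hw => (hva w hw).trans (hva' w hw)⟩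
  · exact ⟨v, hv.trans_le (hva' v h).le, fun w hw => (hva w hw).trans (hva' w (h.trans hw))⟩

lemma lexLt_add_right {d e c : Option ℕ →₀ ℕ} (h : lexLt d e) : lexLt (d + c) (e + c) := by
  obtain ⟨v, hv, hva⟩ := h
  exact ⟨v, by simp [Finsupp.add_apply]; omega, fun w hw => by simp [Finsupp.add_apply, hva w hw]⟩

lemma sDx_eq_sum (f : MP) (T : Finset (Option ℕ)) (hT : f.vars ⊆ T) :
    sDx f = ∑ v ∈ T, cvar v * MvPolynomial.pderiv v f := by
  refine Finset.sum_subset hT fun v _ hv => ?_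
  rw [pderiv_eq_zero_of_notMem_vars hv, mul_zero]

lemma sDx_add (f g : MP) : sDx (f + g) = sDx f + sDx g := by
  rw [sDx_eq_sum (f+g) (f.vars ∪ g.vars) (vars_add_subset f g),
    sDx_eq_sum f (f.vars ∪ g.vars) Finset.subset_union_left,
    sDx_eq_sum g (f.vars ∪ g.vars) Finset.subset_union_right, ← Finset.sum_add_distrib]
  simp [mul_add]

lemma sDx_mul (f g : MP) : sDx (f * g) = sDx f * g + f * sDx g := by
  rw [sDx_eq_sum (f*g) (f.vars ∪ g.vars) (vars_mul _ _),
    sDx_eq_sum f (f.vars ∪ g.vars) Finset.subset_union_left,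
    sDx_eq_sum g (f.vars ∪ g.vars) Finset.subset_union_right,
    Finset.mul_sum, Finset.sum_mul, ← Finset.sum_add_distrib]
  refine Finset.sum_congr rfl fun v _ => ?_
  rw [pderiv_mul]; ring

lemma sDx_zero : sDx 0 = 0 := by rw [sDx_def']; simp [vars_0]

lemma sDx_X (k : ℕ) : sDx (MvPolynomial.X (some k)) = MvPolynomial.X (some (k + 1)) := by
  rw [sDx_def', vars_X]
  simp [cvar]

lemma sDx_C_mul (a : ℂ) (f : MP) : sDx (MvPolynomial.C a * f) = MvPolynomial.C a * sDx f := by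
  rw [sDx_eq_sum (C a * f) f.vars (by
    refine (vars_mul _ _).trans ?_
    rw [vars_C]; simp), sDx_def', Finset.mul_sum]
  refine Finset.sum_congr rfl fun v _ => ?_
  rw [pderiv_C_mul]; ring

lemma sDx_sum {ι : Type*} (T : Finset ι) (h : ι → MP) :
    sDx (∑ i ∈ T, h i) = ∑ i ∈ T, sDx (h i) := by
  classical
  induction T using Finset.induction_on with
  | empty => simp [sDx_zero]
  | @insert a s hne ih => rw [Finset.sum_insert hne, sDx_add, ih, Finset.sum_insert hne]

lemma sDx_iter_g (s : ℕ) :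
    sDx^[s] (MvPolynomial.X (some 0) * MvPolynomial.X (some 1)) =
      ∑ j ∈ Finset.range (s + 1), MvPolynomial.C ((s.choose j : ℂ)) *
        (MvPolynomial.X (some j) * MvPolynomial.X (some (s + 1 - j))) := by
  induction s with
  | zero => simp
  | succ s ih =>
    rw [Function.iterate_succ_apply', ih, sDx_sum]
    have step : ∀ j, sDx (MvPolynomial.C ((s.choose j : ℂ)) *
        (MvPolynomial.X (some j) * MvPolynomial.X (some (s + 1 - j)))) =
        MvPolynomial.C ((s.choose j : ℂ)) *
          (MvPolynomial.X (some (j+1)) * MvPolynomial.X (some (s + 1 - j))) +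
        MvPolynomial.C ((s.choose j : ℂ)) *
          (MvPolynomial.X (some j) * MvPolynomial.X (some (s + 1 - j + 1))) := by
      intro j
      rw [sDx_C_mul, sDx_mul, sDx_X, sDx_X, mul_add]
    simp only [step]
    rw [Finset.sum_add_distrib]
    -- second sum: extend to range (s+2) since choose s (s+1) = 0
    have h2 : ∑ j ∈ Finset.range (s + 1), MvPolynomial.C ((s.choose j : ℂ)) *
        (MvPolynomial.X (some j) * MvPolynomial.X (some (s + 1 - j + 1))) =
        ∑ j ∈ Finset.range (s + 2), MvPolynomial.C ((s.choose j : ℂ)) *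
        (MvPolynomial.X (some j) * MvPolynomial.X (some (s + 2 - j))) := by
      rw [Finset.sum_range_succ (n := s + 1)]
      have : (s.choose (s+1) : ℂ) = 0 := by
        rw [Nat.choose_eq_zero_of_lt (by omega)]; simp
      rw [this]
      simp only [map_zero, zero_mul, add_zero]
      refine Finset.sum_congr rfl fun j hj => ?_
      rw [Finset.mem_range] at hj
      have hx : s + 1 - j + 1 = s + 2 - j := by omega
      rw [hx]
    rw [h2]
    -- RHS: peel j=0 via sum_range_succ'
    rw [Finset.sum_range_succ' (n := s + 1), Finset.sum_range_succ' (n := s + 1)]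
    simp only [Nat.sub_zero, Nat.choose_zero_right, Nat.cast_one]
    have key : (∑ j ∈ Finset.range (s + 1), MvPolynomial.C ((s.choose j : ℂ)) *
        (MvPolynomial.X (some (j+1)) * MvPolynomial.X (some (s + 1 - j)))) +
        (∑ k ∈ Finset.range (s + 1), MvPolynomial.C ((s.choose (k+1) : ℂ)) *
        (MvPolynomial.X (some (k+1)) * MvPolynomial.X (some (s + 2 - (k + 1))))) =
        ∑ k ∈ Finset.range (s + 1), MvPolynomial.C (((s+1).choose (k+1) : ℂ)) *
        (MvPolynomial.X (some (k+1)) * MvPolynomial.X (some (s + 1 + 1 - (k + 1)))) := by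
      rw [← Finset.sum_add_distrib]
      refine Finset.sum_congr rfl fun j hj => ?_
      rw [Finset.mem_range] at hj
      have hch : (((s+1).choose (j+1) : ℕ) : ℂ) = (s.choose j : ℂ) + (s.choose (j+1) : ℂ) := by
        rw [Nat.choose_succ_succ]; push_cast; ring
      rw [hch, map_add, add_mul, show s + 1 + 1 - (j + 1) = s + 1 - j by omega]
    rw [← add_assoc, key]

lemma mem_support_pderiv {h : MP} {v : Option ℕ} {d : Option ℕ →₀ ℕ}
    (hd : d ∈ (MvPolynomial.pderiv v h).support) : d + Finsupp.single v 1 ∈ h.support := by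
  classical
  have hrw : MvPolynomial.pderiv v h =
      ∑ u ∈ h.support, monomial (u - Finsupp.single v 1) (coeff u h * u v) := by
    conv_lhs => rw [h.as_sum]
    rw [map_sum]
    exact Finset.sum_congr rfl fun u _ => pderiv_monomial
  rw [hrw] at hd
  have := MvPolynomial.support_sum hd
  rw [Finset.mem_biUnion] at this
  obtain ⟨u, hu, hdu⟩ := this
  have hsub := support_monomial_subset hdu
  rw [Finset.mem_singleton] at hsub
  subst hsub
  -- need u v ≠ 0
  have huv : u v ≠ 0 := by
    intro h0
    rw [mem_support_iff] at hdu
    simp [coeff_monomial, h0] at hdu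
  have : u - Finsupp.single v 1 + Finsupp.single v 1 = u := by
    ext w
    by_cases hw : w = v
    · subst hw; simp [Finsupp.single_apply]; omega
    · simp [Finsupp.single_apply, hw, Ne.symm hw]
  rwa [this]

lemma X_mul_monomial (p : Option ℕ) (D : Option ℕ →₀ ℕ) (a : ℂ) :
    (MvPolynomial.X p : MP) * monomial D a = monomial (D + Finsupp.single p 1) a := by
  rw [X, monomial_mul, one_mul, add_comm]

lemma C_mul_Xpow_mul_monomial (a : ℂ) (v : Option ℕ) (i : ℕ) (E : Option ℕ →₀ ℕ) :
    (MvPolynomial.C a : MP) * MvPolynomial.X v ^ i * monomial E (1:ℂ) =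
      monomial (E + Finsupp.single v i) a := by
  rw [X_pow_eq_monomial, C_apply, monomial_mul, monomial_mul]
  simp [add_comm]

lemma g_eq : (MvPolynomial.X (some 0) : MP) * MvPolynomial.X (some 1) =
    monomial (Finsupp.single (some 0) 1 + Finsupp.single (some 1) 1) 1 := by
  rw [X, X, monomial_mul, one_mul]

lemma vars_g : ((MvPolynomial.X (some 0) : MP) * MvPolynomial.X (some 1)).vars
    = {some 0, some 1} := by
  rw [g_eq, vars_monomial one_ne_zero]
  rw [Finsupp.support_add_eq]
  · rw [Finsupp.support_single_ne_zero _ one_ne_zero, Finsupp.support_single_ne_zero _ one_ne_zero]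
    rfl
  · rw [Finsupp.support_single_ne_zero _ one_ne_zero, Finsupp.support_single_ne_zero _ one_ne_zero]
    simp

lemma uBound_g : uBound ((MvPolynomial.X (some 0) : MP) * MvPolynomial.X (some 1)) = 2 := by
  rw [uBound, vars_g]
  rfl

lemma pderiv_g_zero : MvPolynomial.pderiv (some 0)
    ((MvPolynomial.X (some 0) : MP) * MvPolynomial.X (some 1)) = MvPolynomial.X (some 1) := by
  rw [pderiv_mul]; simp

lemma pderiv_g_one : MvPolynomial.pderiv (some 1)
    ((MvPolynomial.X (some 0) : MP) * MvPolynomial.X (some 1)) = MvPolynomial.X (some 0) := by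
  rw [pderiv_mul]; simp

lemma pderiv_g_big (s : ℕ) (hs : 2 ≤ s) : MvPolynomial.pderiv (some s)
    ((MvPolynomial.X (some 0) : MP) * MvPolynomial.X (some 1)) = 0 := by
  rw [pderiv_mul, pderiv_X_of_ne (by simp; omega), pderiv_X_of_ne (by simp; omega)]
  simp

lemma vars_subset_of_uBound {f : MP} {N : ℕ} (hN : uBound f ≤ N) :
    f.vars ⊆ insert none ((Finset.range N).image some) := by
  intro v hv
  have hle : varRank v ≤ N := le_trans (Finset.le_sup hv) hN
  cases v with
  | none => simp
  | some k =>
    simp only [Finset.mem_insert, Finset.mem_image, Finset.mem_range]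
    exact Or.inr ⟨k, by simpa [varRank] using hle, rfl⟩

lemma pderiv_zero_of_uBound {f : MP} {s : ℕ} (hs : uBound f ≤ s) :
    MvPolynomial.pderiv (some s) f = 0 := by
  apply pderiv_eq_zero_of_notMem_vars
  intro hmem
  have := Finset.le_sup (f := varRank) hmem
  rw [show (vars f).sup varRank = uBound f from rfl] at this
  rw [show varRank (some s) = s + 1 from rfl] at this
  omega

/-- If `d` agrees with `E` on all variables of rank ≥ 2 then `d <lex E + e₁`. -/
lemma lexM1 {d E : Option ℕ →₀ ℕ} (h : ∀ w, 2 ≤ varRank w → d w = E w) :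
    lexLt d (E + Finsupp.single (some 1) 1) := by
  refine ⟨some 1, ?_, fun w hw => ?_⟩
  · have := h (some 1) (by simp [varRank])
    simp [Finsupp.add_apply, Finsupp.single_apply, this]
  · have h2 : 2 ≤ varRank w := by
      have := hw
      simp only [varRank] at this ⊢
      omega
    have hw1 : w ≠ some 1 := by rintro rfl; simp [varRank] at hw
    rw [h w h2]
    simp [Finsupp.add_apply, Finsupp.single_apply, Ne.symm hw1]

lemma lexB {d E : Option ℕ →₀ ℕ} {s p q : ℕ} (hp : 2 ≤ p) (hq : 2 ≤ q) (hpq : p + q = s + 1)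
    (h : lexLt (d + Finsupp.single (some s) 1) E) :
    lexLt (d + Finsupp.single (some p) 1 + Finsupp.single (some q) 1)
      (E + Finsupp.single (some 1) 1) := by
  have hps : p < s := by omega
  have hqs : q < s := by omega
  obtain ⟨v, hv, hva⟩ := h
  by_cases hrank : s + 1 < varRank v
  · obtain ⟨k, rfl⟩ : ∃ k, v = some k := by
      cases v with
      | none => simp [varRank] at hrank
      | some k => exact ⟨k, rfl⟩
    have hks : s < k := by simpa [varRank] using hrank
    refine ⟨some k, ?_, fun w hw => ?_⟩
    · simp only [Finsupp.add_apply, Finsupp.single_apply, Option.some.injEq] at hv ⊢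
      split_ifs at hv ⊢ <;> omega
    · obtain ⟨k', rfl⟩ : ∃ k', w = some k' := by
        cases w with
        | none => simp [varRank] at hw
        | some k' => exact ⟨k', rfl⟩
      have hkk : k < k' := by simpa [varRank] using hw
      have h2 := hva (some k') hw
      simp only [Finsupp.add_apply, Finsupp.single_apply, Option.some.injEq] at h2 ⊢
      split_ifs at h2 ⊢ <;> omega
  · -- witness `some s`
    have hds : d (some s) + 1 ≤ E (some s) := by
      rcases eq_or_ne v (some s) with rfl | hvs
      · have h' : d (some s) + 1 < E (some s) := by
          simpa [Finsupp.add_apply, Finsupp.single_apply] using hv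
        omega
      · have hlt : varRank v < varRank (some s) := by
          cases v with
          | none => simp [varRank]
          | some k =>
            simp only [varRank] at hrank ⊢
            have : k ≠ s := by simpa using hvs
            omega
        have h2 := hva (some s) hlt
        have h3 : d (some s) + 1 = E (some s) := by
          simpa [Finsupp.add_apply, Finsupp.single_apply] using h2
        omega
    refine ⟨some s, ?_, fun w hw => ?_⟩
    · simp only [Finsupp.add_apply, Finsupp.single_apply, Option.some.injEq]
      split_ifs <;> omega
    · obtain ⟨k', rfl⟩ : ∃ k', w = some k' := by
        cases w with
        | none => simp [varRank] at hw
        | some k' => exact ⟨k', rfl⟩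
      have hsk : s < k' := by simpa [varRank] using hw
      have hlt : varRank v < varRank (some k') := by
        cases v with
        | none => simp only [varRank]; omega
        | some k => simp only [varRank] at hrank ⊢; omega
      have h2 := hva (some k') hlt
      simp only [Finsupp.add_apply, Finsupp.single_apply, Option.some.injEq] at h2 ⊢
      split_ifs at h2 ⊢ <;> omega

/-- middle terms of the leading part -/
lemma lexLmid {E : Option ℕ →₀ ℕ} {s p q i : ℕ} (ha : 1 ≤ E (some s))
    (hp : 2 ≤ p) (hq : 2 ≤ q) (hpq : p + q = s + 1) :
    lexLt (Finsupp.single (some 0) i +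
      (E - Finsupp.single (some s) 1 + Finsupp.single (some p) 1 + Finsupp.single (some q) 1))
      (E + Finsupp.single (some 1) 1) := by
  have hps : p < s := by omega
  have hqs : q < s := by omega
  refine ⟨some s, ?_, fun w hw => ?_⟩
  · simp only [Finsupp.add_apply, Finsupp.tsub_apply, Finsupp.single_apply, Option.some.injEq]
    split_ifs <;> omega
  · obtain ⟨k', rfl⟩ : ∃ k', w = some k' := by
      cases w with
      | none => simp [varRank] at hw
      | some k' => exact ⟨k', rfl⟩
    have hsk : s < k' := by simpa [varRank] using hw
    simp only [Finsupp.add_apply, Finsupp.tsub_apply, Finsupp.single_apply, Option.some.injEq]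
    split_ifs <;> omega

-- (a) pderiv of F

lemma pderiv_F (f : ℕ →₀ ℂ) (v : Option ℕ) (hv : v ≠ some 0) :
    MvPolynomial.pderiv v (∑ i ∈ f.support, MvPolynomial.C (f i) *
      (MvPolynomial.X (some 0) : MP) ^ i) = 0 := by
  rw [map_sum]
  refine Finset.sum_eq_zero fun i _ => ?_
  rw [pderiv_C_mul, pderiv_pow, pderiv_X_of_ne (Ne.symm hv)]
  ring

-- (b) support of F
lemma supp_F (f : ℕ →₀ ℂ) {d : Option ℕ →₀ ℕ}
    (hd : d ∈ (∑ i ∈ f.support, MvPolynomial.C (f i) *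
      (MvPolynomial.X (some 0) : MP) ^ i).support) : ∃ i, d = Finsupp.single (some 0) i := by
  classical
  have := MvPolynomial.support_sum hd
  rw [Finset.mem_biUnion] at this
  obtain ⟨i, _, hdi⟩ := this
  rw [C_mul_X_pow_eq_monomial] at hdi
  have := support_monomial_subset hdi
  rw [Finset.mem_singleton] at this
  exact ⟨i, this⟩

-- support of F * monomial
lemma supp_F_mul (f : ℕ →₀ ℂ) (D : Option ℕ →₀ ℕ) (a : ℂ) {d : Option ℕ →₀ ℕ}
    (hd : d ∈ ((∑ i ∈ f.support, MvPolynomial.C (f i) * (MvPolynomial.X (some 0) : MP) ^ i) *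
      monomial D a).support) : ∃ i, d = Finsupp.single (some 0) i + D := by
  classical
  have := MvPolynomial.support_mul _ _ hd
  rw [Finset.mem_add] at this
  obtain ⟨b, hb, c, hc, rfl⟩ := this
  obtain ⟨i, rfl⟩ := supp_F f hb
  have := support_monomial_subset hc
  rw [Finset.mem_singleton] at this
  exact ⟨i, by rw [this]⟩

-- product normal form
lemma prod_form (h : MP) (c b : ℂ) (p q : Option ℕ) (D : Option ℕ →₀ ℕ) :
    (MvPolynomial.C c : MP) * ((MvPolynomial.X p * MvPolynomial.X q) * (h * monomial D b)) =
      h * monomial (D + Finsupp.single p 1 + Finsupp.single q 1) (c * b) := by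
  have : (MvPolynomial.C c : MP) * ((MvPolynomial.X p * MvPolynomial.X q) * (h * monomial D b))
      = h * (MvPolynomial.C c * (MvPolynomial.X q * (MvPolynomial.X p * monomial D b))) := by
    ring
  rw [this, X_mul_monomial, X_mul_monomial, C_mul_monomial, add_right_comm]

-- key cancellation with the coefficient trick
lemma lead_form (h : MP) (E : Option ℕ →₀ ℕ) (s : ℕ) (c : ℂ) :
    h * monomial ((E - Finsupp.single (some s) 1) + Finsupp.single (some 1) 1
        + Finsupp.single (some s) 1) (c * (E (some s) : ℂ)) =
      MvPolynomial.C (c * (E (some s) : ℂ)) * (h * monomial E 1 * MvPolynomial.X (some 1)) := by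
  by_cases ha : E (some s) = 0
  · simp [ha]
  · have hexp : (E - Finsupp.single (some s) 1) + Finsupp.single (some 1) 1
        + Finsupp.single (some s) 1 = E + Finsupp.single (some 1) 1 := by
      ext w
      rcases eq_or_ne w (some s) with rfl | hw
      · simp only [Finsupp.add_apply, Finsupp.tsub_apply, Finsupp.single_apply,
          Option.some.injEq]
        split_ifs <;> omega
      · simp only [Finsupp.add_apply, Finsupp.tsub_apply, Finsupp.single_apply]
        split_ifs with h1 h2 <;> first | (exfalso; exact hw (h1 ▸ rfl)) | omega
    rw [hexp]
    have h2 : MvPolynomial.C (c * (E (some s):ℂ)) * (h * monomial E 1 * MvPolynomial.X (some 1))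
        = h * (MvPolynomial.X (some 1) *
          (MvPolynomial.C (c * (E (some s):ℂ)) * monomial E 1)) := by ring
    rw [h2, C_mul_monomial, mul_one, X_mul_monomial]

noncomputable def inner' (P : MP) (s : ℕ) : MP :=
  (∑ j ∈ Finset.range s, MvPolynomial.C ((s.choose (j+1) : ℂ)) *
    (MvPolynomial.X (some (j+1)) * MvPolynomial.X (some (s - j)))) * MvPolynomial.pderiv (some s) P

lemma star (P : MP) :
    dpBracket (MvPolynomial.X (some 0) * MvPolynomial.X (some 1)) P =
      (∑ s ∈ Finset.range (max 2 (uBound P)), inner' P s)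
      + MvPolynomial.X (some 0) * (MvPolynomial.X none)^2 * MvPolynomial.pderiv none P
      - MvPolynomial.X (some 1) * P := by
  set N := max 2 (uBound P) with hNdef
  have hN2 : 2 ≤ N := le_max_left _ _
  rw [dpBracket, uBound_g, Finset.sum_sub_distrib]
  -- second sum
  have hB : ∑ s ∈ Finset.range N, sDx^[s] P *
      MvPolynomial.pderiv (some s) (MvPolynomial.X (some 0) * MvPolynomial.X (some 1)) =
      P * MvPolynomial.X (some 1) + sDx P * MvPolynomial.X (some 0) := by
    rw [← Finset.sum_subset (Finset.range_subset_range.2 hN2)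
      (fun s _ hs => by
        rw [pderiv_g_big s (by simp at hs ⊢; omega), mul_zero])]
    rw [Finset.sum_range_succ, Finset.sum_range_one, pderiv_g_zero, pderiv_g_one]
    simp
  -- first sum
  have hA : ∑ s ∈ Finset.range N,
      sDx^[s] (MvPolynomial.X (some 0) * MvPolynomial.X (some 1)) *
        MvPolynomial.pderiv (some s) P =
      (∑ s ∈ Finset.range N, inner' P s) +
      MvPolynomial.X (some 0) * ∑ s ∈ Finset.range N,
        MvPolynomial.X (some (s+1)) * MvPolynomial.pderiv (some s) P := by
    rw [Finset.mul_sum, ← Finset.sum_add_distrib]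
    refine Finset.sum_congr rfl fun s _ => ?_
    rw [sDx_iter_g, Finset.sum_range_succ', inner']
    simp only [Nat.sub_zero, Nat.choose_zero_right, Nat.cast_one, map_one, one_mul,
      show ∀ j, s + 1 - (j + 1) = s - j from fun j => by omega]
    ring
  -- sDx P expansion
  have hvars := vars_subset_of_uBound (f := P) (N := N) (le_max_right _ _)
  have hD : sDx P = -(MvPolynomial.X none)^2 * MvPolynomial.pderiv none P +
      ∑ k ∈ Finset.range N, MvPolynomial.X (some (k+1)) * MvPolynomial.pderiv (some k) P := by
    have hD0 : sDx P = ∑ v ∈ insert none ((Finset.range N).image some),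
        cvar v * MvPolynomial.pderiv v P := by
      rw [sDx_def']
      exact Finset.sum_subset hvars fun v _ hv => by
        rw [pderiv_eq_zero_of_notMem_vars hv, mul_zero]
    rw [hD0, Finset.sum_insert (by simp), Finset.sum_image (fun a _ b _ h => by
      simpa using h)]
    rfl
  rw [hA, hB, hD]
  ring

lemma pderiv_L (f : ℕ →₀ ℂ) (E : Option ℕ →₀ ℕ) (s : ℕ) (hs : 1 ≤ s) :
    MvPolynomial.pderiv (some s) ((∑ i ∈ f.support, MvPolynomial.C (f i) *
      (MvPolynomial.X (some 0) : MP) ^ i) * monomial E 1) =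
    (∑ i ∈ f.support, MvPolynomial.C (f i) * (MvPolynomial.X (some 0) : MP) ^ i) *
      monomial (E - Finsupp.single (some s) 1) ((E (some s) : ℂ)) := by
  rw [pderiv_mul, pderiv_F f (some s) (by simp; omega), zero_mul, zero_add, pderiv_monomial,
    one_mul]

lemma inner_L_decomp (f : ℕ →₀ ℂ) (E : Option ℕ →₀ ℕ) (s : ℕ) (hs : 1 ≤ s) :
    ∃ R : MP, inner' ((∑ i ∈ f.support, MvPolynomial.C (f i) *
        (MvPolynomial.X (some 0) : MP) ^ i) * monomial E 1) s =
      MvPolynomial.C ((if s = 1 then 1 else (s:ℂ)+1) * (E (some s) : ℂ)) *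
        ((∑ i ∈ f.support, MvPolynomial.C (f i) * (MvPolynomial.X (some 0) : MP) ^ i) *
          monomial E 1 * MvPolynomial.X (some 1)) + R ∧
      ∀ d ∈ R.support, lexLt d (E + Finsupp.single (some 1) 1) := by
  set F : MP := ∑ i ∈ f.support, MvPolynomial.C (f i) * (MvPolynomial.X (some 0) : MP) ^ i
    with hF
  have hW : inner' (F * monomial E 1) s = ∑ j ∈ Finset.range s,
      F * monomial ((E - Finsupp.single (some s) 1) + Finsupp.single (some (j+1)) 1
        + Finsupp.single (some (s-j)) 1) ((s.choose (j+1) : ℂ) * (E (some s) : ℂ)) := by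
    rw [inner', pderiv_L f E s hs, Finset.sum_mul]
    refine Finset.sum_congr rfl fun j hj => ?_
    rw [mul_assoc, prod_form]
  rcases eq_or_lt_of_le hs with hs1 | hs2
  · -- s = 1
    refine ⟨0, ?_, by simp⟩
    rw [hW, ← hs1, Finset.sum_range_one]
    rw [show (1:ℕ) - 0 = 1 from rfl, show (0:ℕ) + 1 = 1 from rfl]
    rw [lead_form F E 1 ((Nat.choose 1 1 : ℂ))]
    norm_num
  · -- s ≥ 2
    have hsplit : Finset.range s = insert 0 (insert (s-1) (Finset.Ico 1 (s-1))) := by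
      ext x
      simp only [Finset.mem_range, Finset.mem_insert, Finset.mem_Ico]
      omega
    have h0notin : (0:ℕ) ∉ insert (s-1) (Finset.Ico 1 (s-1)) := by
      simp only [Finset.mem_insert, Finset.mem_Ico]
      omega
    have h1notin : s - 1 ∉ Finset.Ico 1 (s-1) := by
      simp only [Finset.mem_Ico]
      omega
    refine ⟨∑ j ∈ Finset.Ico 1 (s-1),
      F * monomial ((E - Finsupp.single (some s) 1) + Finsupp.single (some (j+1)) 1
        + Finsupp.single (some (s-j)) 1) ((s.choose (j+1) : ℂ) * (E (some s) : ℂ)), ?_, ?_⟩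
    · rw [hW, hsplit, Finset.sum_insert h0notin, Finset.sum_insert h1notin]
      have hterm0 : F * monomial ((E - Finsupp.single (some s) 1) +
          Finsupp.single (some (0+1)) 1 + Finsupp.single (some (s-0)) 1)
          ((s.choose (0+1) : ℂ) * (E (some s) : ℂ)) =
          MvPolynomial.C ((s : ℂ) * (E (some s) : ℂ)) * (F * monomial E 1 *
            MvPolynomial.X (some 1)) := by
        rw [show (0:ℕ)+1 = 1 from rfl, show s - 0 = s from rfl, lead_form F E s,
          Nat.choose_one_right]
      have hterm1 : F * monomial ((E - Finsupp.single (some s) 1) +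
          Finsupp.single (some (s-1+1)) 1 + Finsupp.single (some (s-(s-1))) 1)
          ((s.choose (s-1+1) : ℂ) * (E (some s) : ℂ)) =
          MvPolynomial.C ((1 : ℂ) * (E (some s) : ℂ)) * (F * monomial E 1 *
            MvPolynomial.X (some 1)) := by
        rw [show s - 1 + 1 = s by omega, show s - (s-1) = 1 by omega, add_right_comm,
          lead_form F E s, Nat.choose_self]
        norm_num
      rw [hterm0, hterm1, if_neg (by omega : ¬ s = 1)]
      rw [show ((s:ℂ)+1) * (E (some s) : ℂ) = (s:ℂ) * (E (some s):ℂ) + 1 * (E (some s):ℂ)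
        by ring, map_add, add_mul]
      ring
    · intro d hd
      by_cases ha : E (some s) = 0
      · exfalso
        rw [ha] at hd
        simp at hd
      · classical
        have := MvPolynomial.support_sum hd
        rw [Finset.mem_biUnion] at this
        obtain ⟨j, hj, hdj⟩ := this
        rw [Finset.mem_Ico] at hj
        obtain ⟨i, rfl⟩ := supp_F_mul f _ _ hdj
        exact lexLmid (by omega) (by omega) (by omega : 2 ≤ s - j) (by omega)

lemma supp_inner_Q (Q : MP) (E : Option ℕ →₀ ℕ) (hQ : ∀ d ∈ Q.support, lexLt d E) (s : ℕ) :
    ∀ d ∈ (inner' Q s).support, lexLt d (E + Finsupp.single (some 1) 1) := by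
  classical
  intro d hd
  rw [inner', Finset.sum_mul] at hd
  have := MvPolynomial.support_sum hd
  rw [Finset.mem_biUnion] at this
  obtain ⟨j, hj, hdj⟩ := this
  rw [Finset.mem_range] at hj
  -- C c * (X p * X q) * ∂Q  : reduce to support of (X p * X q) * ∂Q
  rw [mul_assoc, C_mul'] at hdj
  have hdj2 := Finsupp.support_smul hdj
  have hmul := MvPolynomial.support_mul _ _ hdj2
  rw [Finset.mem_add] at hmul
  obtain ⟨b, hb, c, hc, rfl⟩ := hmul
  have hXX : (MvPolynomial.X (some (j+1)) * MvPolynomial.X (some (s-j)) : MP) =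
      monomial (Finsupp.single (some (j+1)) 1 + Finsupp.single (some (s-j)) 1) 1 := by
    rw [X, X, monomial_mul, one_mul]
  rw [hXX] at hb
  have hbeq := support_monomial_subset hb
  rw [Finset.mem_singleton] at hbeq
  subst hbeq
  have hcQ : c + Finsupp.single (some s) 1 ∈ Q.support := mem_support_pderiv hc
  have hlex := hQ _ hcQ
  by_cases hj0 : j = 0
  · subst hj0
    have heq : (Finsupp.single (some (0+1)) 1 + Finsupp.single (some (s-0)) 1) + c =
        (c + Finsupp.single (some s) 1) + Finsupp.single (some 1) 1 := by
      rw [show (0:ℕ)+1 = 1 from rfl, show s - 0 = s from rfl]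
      abel
    rw [heq]
    exact lexLt_add_right hlex
  · by_cases hj1 : j = s - 1
    · subst hj1
      have heq : (Finsupp.single (some (s-1+1)) 1 + Finsupp.single (some (s-(s-1))) 1) + c =
          (c + Finsupp.single (some s) 1) + Finsupp.single (some 1) 1 := by
        rw [show s - 1 + 1 = s by omega, show s - (s-1) = 1 by omega]
        abel
      rw [heq]
      exact lexLt_add_right hlex
    · have heq : (Finsupp.single (some (j+1)) 1 + Finsupp.single (some (s-j)) 1) + c =
          c + Finsupp.single (some (j+1)) 1 + Finsupp.single (some (s-j)) 1 := by abel
      rw [heq]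
      exact lexB (by omega) (by omega : 2 ≤ s - j) (by omega) hlex

lemma lexC {D E : Option ℕ →₀ ℕ} (h : lexLt D E) :
    lexLt (D + Finsupp.single (some 0) 1 + Finsupp.single (none : Option ℕ) 1)
      (E + Finsupp.single (some 1) 1) := by
  obtain ⟨v, hv, hva⟩ := h
  by_cases hr : 2 ≤ varRank v
  · obtain ⟨k, rfl⟩ : ∃ k, v = some k := by
      cases v with
      | none => simp [varRank] at hr
      | some k => exact ⟨k, rfl⟩
    have hk1 : 1 ≤ k := by simpa [varRank] using hr
    refine ⟨some k, ?_, fun w hw => ?_⟩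
    · simp [Finsupp.add_apply, Finsupp.single_apply] at hv ⊢
      split_ifs <;> omega
    · obtain ⟨k', rfl⟩ : ∃ k', w = some k' := by
        cases w with
        | none => simp [varRank] at hw
        | some k' => exact ⟨k', rfl⟩
      have hkk : k < k' := by simpa [varRank] using hw
      have h2 := hva (some k') hw
      simp [Finsupp.add_apply, Finsupp.single_apply] at h2 ⊢
      split_ifs <;> omega
  · apply lexM1
    intro w hw
    have hlt : varRank v < varRank w := by omega
    have h2 := hva w hlt
    obtain ⟨k', rfl⟩ : ∃ k', w = some k' := by
      cases w with
      | none => simp [varRank] at hw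
      | some k' => exact ⟨k', rfl⟩
    have hk' : 1 ≤ k' := by simpa [varRank] using hw
    simp [Finsupp.add_apply, Finsupp.single_apply] at h2 ⊢
    split_ifs <;> omega

/-- If `P` has lexicographically leading part `f(u_0) u_1^{α_1}⋯u_m^{α_m} x^{-n}`
(with `m ≥ 1`), i.e. `P = (∑_i f_i u_0^i)·M + Q` with `M` the monomial
`u_1^{α_1}⋯u_m^{α_m} t^n` and every monomial of `Q` lexicographically smaller than `M`,
then `[u_0 u_1, P] = (∑_{k=1}^m (k+1)α_k − α_1 − 1)·f(u_0)·M·u_1` plus monomials of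
lower lexicographic order. -/
theorem bracket_leading_term (m n : ℕ) (hm : 1 ≤ m) (α : ℕ → ℕ) (hα : 1 ≤ α m)
    (f : ℕ →₀ ℂ) (hf : f ≠ 0) (P Q : MvPolynomial (Option ℕ) ℂ)
    (E : Option ℕ →₀ ℕ)
    (hE : E = Finsupp.single (none : Option ℕ) n +
      ∑ k ∈ Finset.Icc 1 m, Finsupp.single (some k) (α k))
    (hP : P = (∑ i ∈ f.support, MvPolynomial.C (f i) * (MvPolynomial.X (some 0)) ^ i) *
        MvPolynomial.monomial E (1 : ℂ) + Q)
    (hQ : ∀ d ∈ Q.support, lexLt d E) :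
    ∃ Q' : MvPolynomial (Option ℕ) ℂ,
      dpBracket (MvPolynomial.X (some 0) * MvPolynomial.X (some 1)) P =
        MvPolynomial.C ((∑ k ∈ Finset.Icc 1 m, ((k : ℂ) + 1) * (α k : ℂ)) - (α 1 : ℂ) - 1) *
          ((∑ i ∈ f.support, MvPolynomial.C (f i) * (MvPolynomial.X (some 0)) ^ i) *
            MvPolynomial.monomial E (1 : ℂ)) * MvPolynomial.X (some 1) + Q' ∧
      ∀ d ∈ Q'.support, lexLt d (E + Finsupp.single (some 1) 1) := by
  classical
  -- E evaluations
  have happ : ∀ w : Option ℕ, E w = (Finsupp.single (none : Option ℕ) n) w +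
      ∑ k ∈ Finset.Icc 1 m, (Finsupp.single (some k) (α k)) w := by
    intro w; rw [hE]; simp [Finsupp.finset_sum_apply]
  have hEs : ∀ s, 1 ≤ s → s ≤ m → E (some s) = α s := by
    intro s h1 h2
    rw [happ (some s)]
    simp [Finsupp.single_apply, Finset.mem_Icc, h1, h2]
  have hE0 : E (some 0) = 0 := by
    rw [happ (some 0)]
    simp [Finsupp.single_apply, Finset.mem_Icc]
  have hEbig : ∀ s, m < s → E (some s) = 0 := by
    intro s hs
    rw [happ (some s)]
    simp only [Finsupp.single_apply, reduceCtorEq, if_false, zero_add, Option.some.injEq]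
    refine Finset.sum_eq_zero fun k hk => ?_
    rw [Finset.mem_Icc] at hk
    rw [if_neg (by omega)]
  -- uBound facts
  obtain ⟨i0, hi0⟩ := Finsupp.support_nonempty_iff.mpr hf
  have hLmono : (∑ i ∈ f.support, MvPolynomial.C (f i) * (MvPolynomial.X (some 0) : MP) ^ i) *
      MvPolynomial.monomial E (1:ℂ) =
      ∑ i ∈ f.support, monomial (E + Finsupp.single (some 0) i) (f i) := by
    rw [Finset.sum_mul]
    refine Finset.sum_congr rfl fun i _ => ?_
    rw [mul_comm (MvPolynomial.C (f i)) ((MvPolynomial.X (some 0) : MP) ^ i)]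
    rw [mul_assoc, X_pow_eq_monomial, C_apply, monomial_mul, monomial_mul]
    simp [add_comm]
  have hmemP : (E + Finsupp.single (some 0) i0) ∈ P.support := by
    rw [mem_support_iff, hP, coeff_add, hLmono, MvPolynomial.coeff_sum]
    have hQ0 : MvPolynomial.coeff (E + Finsupp.single (some 0) i0) Q = 0 := by
      by_contra hne
      obtain ⟨v, hv, -⟩ := hQ _ (mem_support_iff.mpr hne)
      rw [Finsupp.add_apply] at hv
      omega
    rw [hQ0, add_zero]
    rw [Finset.sum_eq_single i0 (fun i _ hne => ?_) (fun h => absurd hi0 h)]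
    · rw [coeff_monomial, if_pos rfl]
      exact Finsupp.mem_support_iff.mp hi0
    · rw [coeff_monomial, if_neg]
      intro hcon
      apply hne
      have := congrArg (fun g : Option ℕ →₀ ℕ => g (some 0)) hcon
      simpa [Finsupp.add_apply, Finsupp.single_apply] using this
  have hum : m + 1 ≤ uBound P := by
    have hvm : some m ∈ P.vars := by
      rw [mem_vars]
      refine ⟨_, hmemP, ?_⟩
      rw [Finsupp.mem_support_iff, Finsupp.add_apply, hEs m hm le_rfl]
      omega
    have h2 := Finset.le_sup (f := varRank) hvm
    rw [show P.vars.sup varRank = uBound P from rfl] at h2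
    simpa [varRank] using h2
  have hmN : m + 1 ≤ max 2 (uBound P) := le_trans hum (le_max_right _ _)
  -- the leading decomposition of each inner' L s
  have hdecomp : ∀ s : ℕ, ∃ R : MP,
      inner' ((∑ i ∈ f.support, MvPolynomial.C (f i) * (MvPolynomial.X (some 0) : MP) ^ i) *
        MvPolynomial.monomial E (1:ℂ)) s =
      MvPolynomial.C ((if s = 1 then 1 else (s:ℂ)+1) * (E (some s) : ℂ)) *
        ((∑ i ∈ f.support, MvPolynomial.C (f i) * (MvPolynomial.X (some 0) : MP) ^ i) *
          MvPolynomial.monomial E (1:ℂ) * MvPolynomial.X (some 1)) + R ∧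
      ∀ d ∈ R.support, lexLt d (E + Finsupp.single (some 1) 1) := by
    intro s
    rcases Nat.eq_zero_or_pos s with rfl | hs
    · refine ⟨0, ?_, by simp⟩
      simp [inner', hE0]
    · exact inner_L_decomp f E s hs
  choose R hR1 hR2 using hdecomp
  -- sum of the coefficients
  have hθsum : ∑ s ∈ Finset.range (max 2 (uBound P)),
      ((if s = 1 then 1 else (s:ℂ)+1) * (E (some s) : ℂ)) =
      (∑ k ∈ Finset.Icc 1 m, ((k : ℂ) + 1) * (α k : ℂ)) - (α 1 : ℂ) := by
    have hsub : Finset.Icc 1 m ⊆ Finset.range (max 2 (uBound P)) := by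
      intro x hx
      rw [Finset.mem_range]
      rw [Finset.mem_Icc] at hx
      omega
    rw [← Finset.sum_subset hsub (fun x _ hnx => ?_)]
    · have hpt : ∀ s ∈ Finset.Icc 1 m,
          ((if s = 1 then 1 else (s:ℂ)+1) * (E (some s) : ℂ)) =
          ((s:ℂ)+1) * (α s : ℂ) - (if s = 1 then (α 1 : ℂ) else 0) := by
        intro s hs
        rw [Finset.mem_Icc] at hs
        rw [hEs s hs.1 hs.2]
        by_cases h1 : s = 1
        · subst h1
          rw [if_pos rfl, if_pos rfl]
          push_cast
          ring
        · rw [if_neg h1, if_neg h1]; ring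
      rw [Finset.sum_congr rfl hpt, Finset.sum_sub_distrib]
      congr 1
      rw [Finset.sum_ite_eq' (Finset.Icc 1 m) 1 (fun _ => (α 1 : ℂ))]
      rw [if_pos (by rw [Finset.mem_Icc]; omega)]
    · rw [Finset.mem_Icc] at hnx
      by_cases hx0 : x = 0
      · subst hx0; simp [hE0]
      · rw [hEbig x (by omega)]
        simp
  -- structural identity
  have hstar := star P
  have hinner : ∀ s, inner' P s =
      inner' ((∑ i ∈ f.support, MvPolynomial.C (f i) * (MvPolynomial.X (some 0) : MP) ^ i) *
        MvPolynomial.monomial E (1:ℂ)) s + inner' Q s := by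
    intro s
    rw [inner', inner', inner', hP, map_add, mul_add]
  have hsumL : ∑ s ∈ Finset.range (max 2 (uBound P)),
      inner' ((∑ i ∈ f.support, MvPolynomial.C (f i) * (MvPolynomial.X (some 0) : MP) ^ i) *
        MvPolynomial.monomial E (1:ℂ)) s =
      MvPolynomial.C ((∑ k ∈ Finset.Icc 1 m, ((k : ℂ) + 1) * (α k : ℂ)) - (α 1 : ℂ)) *
        ((∑ i ∈ f.support, MvPolynomial.C (f i) * (MvPolynomial.X (some 0) : MP) ^ i) *
          MvPolynomial.monomial E (1:ℂ) * MvPolynomial.X (some 1)) +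
      ∑ s ∈ Finset.range (max 2 (uBound P)), R s := by
    refine (Finset.sum_congr rfl fun s _ => hR1 s).trans ?_
    rw [Finset.sum_add_distrib, ← Finset.sum_mul, ← map_sum, hθsum]
  refine ⟨(∑ s ∈ Finset.range (max 2 (uBound P)), R s) +
      (∑ s ∈ Finset.range (max 2 (uBound P)), inner' Q s) +
      MvPolynomial.X (some 0) * (MvPolynomial.X (none : Option ℕ))^2 *
        MvPolynomial.pderiv (none : Option ℕ) P - MvPolynomial.X (some 1) * Q, ?_, ?_⟩
  · rw [hstar, Finset.sum_congr rfl (fun s _ => hinner s), Finset.sum_add_distrib, hsumL]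
    rw [show MvPolynomial.C ((∑ k ∈ Finset.Icc 1 m, ((k : ℂ) + 1) * (α k : ℂ)) - (α 1 : ℂ) - 1)
      = MvPolynomial.C ((∑ k ∈ Finset.Icc 1 m, ((k : ℂ) + 1) * (α k : ℂ)) - (α 1 : ℂ)) - 1
      from by rw [map_sub, map_one]]
    have hXP : MvPolynomial.X (some 1) * P = MvPolynomial.X (some 1) *
        ((∑ i ∈ f.support, MvPolynomial.C (f i) * (MvPolynomial.X (some 0) : MP) ^ i) *
          MvPolynomial.monomial E (1:ℂ)) + MvPolynomial.X (some 1) * Q := by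
      rw [hP]; ring
    rw [hXP]
    ring
  · intro d hd
    rw [sub_eq_add_neg] at hd
    rcases Finset.mem_union.mp (MvPolynomial.support_add hd) with hd | hd
    · rcases Finset.mem_union.mp (MvPolynomial.support_add hd) with hd | hd
      · rcases Finset.mem_union.mp (MvPolynomial.support_add hd) with hd | hd
        · obtain ⟨s, -, hds⟩ := Finset.mem_biUnion.mp (MvPolynomial.support_sum hd)
          exact hR2 s d hds
        · obtain ⟨s, -, hds⟩ := Finset.mem_biUnion.mp (MvPolynomial.support_sum hd)
          exact supp_inner_Q Q E hQ s d hds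
      · -- the t-piece
        have hXX : (MvPolynomial.X (some 0) : MP) * (MvPolynomial.X (none : Option ℕ))^2 =
            monomial (Finsupp.single (some 0) 1 + Finsupp.single (none : Option ℕ) 2) 1 := by
          rw [X, X_pow_eq_monomial, monomial_mul, one_mul]
        rw [hXX] at hd
        have h2 := MvPolynomial.support_mul _ _ hd
        rw [Finset.mem_add] at h2
        obtain ⟨b, hb, c, hc, rfl⟩ := h2
        have hbeq := support_monomial_subset hb
        rw [Finset.mem_singleton] at hbeq
        subst hbeq
        have hcP := mem_support_pderiv hc
        rw [hP] at hcP
        rcases Finset.mem_union.mp (MvPolynomial.support_add hcP) with hcL | hcQ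
        · obtain ⟨i, hi⟩ := supp_F_mul f E 1 hcL
          apply lexM1
          intro w hw
          obtain ⟨k, rfl⟩ : ∃ k, w = some k := by
            cases w with
            | none => simp [varRank] at hw
            | some k => exact ⟨k, rfl⟩
          have hk1 : 1 ≤ k := by simpa [varRank] using hw
          have hval := congrArg (fun g : Option ℕ →₀ ℕ => g (some k)) hi
          simp only [Finsupp.add_apply, Finsupp.single_apply, Option.some.injEq,
            reduceCtorEq, if_false] at hval ⊢
          split_ifs at hval ⊢ <;> omega
        · have hlex := hQ _ hcQ
          have heq : (Finsupp.single (some 0) 1 + Finsupp.single (none : Option ℕ) 2) + c =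
              (c + Finsupp.single (none : Option ℕ) 1) + Finsupp.single (some 0) 1 +
                Finsupp.single (none : Option ℕ) 1 := by
            rw [show (2:ℕ) = 1 + 1 from rfl, Finsupp.single_add]
            abel
          rw [heq]
          exact lexC hlex
    · rw [MvPolynomial.support_neg] at hd
      have h2 := MvPolynomial.support_mul _ _ hd
      rw [Finset.mem_add] at h2
      obtain ⟨b, hb, c, hc, rfl⟩ := h2
      rw [MvPolynomial.support_X, Finset.mem_singleton] at hb
      subst hb
      have hlex := lexLt_add_right (c := Finsupp.single (some 1) 1) (hQ c hc)
      rw [add_comm (Finsupp.single (some 1) 1) c]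
      exact hlex
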